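/- arXiv:2009.10797 — 4 statements merged into one kernel-verified Lean document; each statement's English description precedes it below -/
import Mathlib

section
/- Let V be a real vector space equipped with two almost contact structures (Φ₁, ξ₁, η₁) and (Φ₂, ξ₂, η₂) satisfying Φ₁ξ₂ = -Φ₂ξ₁, η₁∘Φ₂ = -η₂∘Φ₁, η₁(ξ₂) = η₂(ξ₁) = 0, and Φ₁∘Φ₂ - η₂⊗ξ₁ = -Φ₂∘Φ₁ + η₁⊗ξ₂. Define ξ₃ := Φ₁ξ₂, η₃ := η₁∘Φ₂, and Φ₃ := Φ₁∘Φ₂ - η₂⊗ξ₁. Then η₃(ξ₃) = 1. -/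
theorem stmt2_general {V : Type*} [AddCommGroup V] [Module ℝ V]
    (Φ₁ Φ₂ : V →ₗ[ℝ] V) (ξ₁ ξ₂ : V) (η₁ η₂ : V →ₗ[ℝ] ℝ)
    (hη₁ : η₁ ξ₁ = 1)
    (hΦ₂ : ∀ x : V, Φ₂ (Φ₂ x) = -x + η₂ x • ξ₂)
    (h1 : Φ₁ ξ₂ = -Φ₂ ξ₁)
    (h4 : η₂ ξ₁ = 0) :
    η₁ (Φ₂ (Φ₁ ξ₂)) = 1 := by
  have hΦ₂ξ₁ : Φ₂ (Φ₂ ξ₁) = -ξ₁ := by rw [hΦ₂, h4, zero_smul, add_zero]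
  rw [h1, map_neg, map_neg, hΦ₂ξ₁, map_neg, neg_neg, hη₁]

theorem stmt2 {V : Type*} [AddCommGroup V] [Module ℝ V]
    (Φ₁ Φ₂ : V →ₗ[ℝ] V) (ξ₁ ξ₂ : V) (η₁ η₂ : V →ₗ[ℝ] ℝ)
    (hΦ₁ : ∀ x : V, Φ₁ (Φ₁ x) = -x + η₁ x • ξ₁) (hη₁ : η₁ ξ₁ = 1)
    (hΦ₂ : ∀ x : V, Φ₂ (Φ₂ x) = -x + η₂ x • ξ₂) (hη₂ : η₂ ξ₂ = 1)
    (h1 : Φ₁ ξ₂ = -Φ₂ ξ₁)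
    (h2 : ∀ x : V, η₁ (Φ₂ x) = -η₂ (Φ₁ x))
    (h3 : η₁ ξ₂ = 0) (h4 : η₂ ξ₁ = 0)
    (h5 : ∀ x : V, Φ₁ (Φ₂ x) - η₂ x • ξ₁ = -Φ₂ (Φ₁ x) + η₁ x • ξ₂) :
    η₁ (Φ₂ (Φ₁ ξ₂)) = 1 :=
  stmt2_general Φ₁ Φ₂ ξ₁ ξ₂ η₁ η₂ hη₁ hΦ₂ h1 h4
end

section
/- With the hypotheses of Kuo's compatibility conditions on two almost contact structures (Φ₁, ξ₁, η₁), (Φ₂, ξ₂, η₂) on a real vector space V (namely Φ₁ξ₂ = -Φ₂ξ₁, η₁∘Φ₂ = -η₂∘Φ₁, η₁(ξ₂) = η₂(ξ₁) = 0, and Φ₁∘Φ₂ - η₂⊗ξ₁ = -Φ₂∘Φ₁ + η₁⊗ξ₂), the triple (Φ₃, ξ₃, η₃) defined by Φ₃ := Φ₁∘Φ₂ - η₂⊗ξ₁, ξ₃ := Φ₁ξ₂, η₃ := η₁∘Φ₂ satisfies Φ₃∘Φ₃ = -id + η₃⊗ξ₃, i.e. (Φ₃, ξ₃, η₃) is an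 almost contact structure. -/
/-!
Any almost contact structure has `Φ ξ = 0` and `η ∘ Φ = 0`. Writing `Φ₃ x = Φ₁ (Φ₂ x) - η₂ x • ξ₁`,
Kuo's relations then give `η₂ (Φ₃ x) = η₁ x` and `Φ₂ (Φ₃ x) = Φ₁ x + η₁ (Φ₂ x) • ξ₂`, so
`Φ₃ (Φ₃ x) = Φ₁ (Φ₂ (Φ₃ x)) - η₂ (Φ₃ x) • ξ₁` collapses by `Φ₁² = -id + η₁ ⊗ ξ₁`.
-/

namespace AlmostContact

variable {V : Type*} [AddCommGroup V] [Module ℝ V] {Φ : V →ₗ[ℝ] V} {ξ : V} {η : V →ₗ[ℝ] ℝ}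

/-- Both sides come from expanding `Φ (Φ (Φ x))` in the two possible ways. -/
lemma eta_map_smul_eq (hΦ : ∀ x, Φ (Φ x) = -x + η x • ξ) (x : V) :
    η (Φ x) • ξ = η x • Φ ξ := by
  have h := congrArg Φ (hΦ x)
  rw [hΦ (Φ x), map_add, map_neg, map_smul] at h
  linear_combination (norm := module) h

lemma map_xi_eq_zero (hΦ : ∀ x, Φ (Φ x) = -x + η x • ξ) (hη : η ξ = 1) : Φ ξ = 0 := by
  have hΦ₂ξ : Φ (Φ ξ) = 0 := by rw [hΦ, hη, one_smul, neg_add_cancel]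
  have hΦξ : Φ ξ = η (Φ ξ) • ξ := by
    simpa [hη] using (eta_map_smul_eq hΦ ξ).symm
  have hsq : η (Φ ξ) * η (Φ ξ) = 0 := by
    have h := congrArg η (congrArg Φ hΦξ)
    rw [hΦ₂ξ, map_smul, hΦξ, map_smul, map_smul, hη] at h
    simpa using h.symm
  rw [hΦξ, mul_self_eq_zero.mp hsq, zero_smul]

lemma eta_map_eq_zero (hΦ : ∀ x, Φ (Φ x) = -x + η x • ξ) (hη : η ξ = 1) (x : V) :
    η (Φ x) = 0 := by
  have h := congrArg η (eta_map_smul_eq hΦ x)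
  rwa [map_xi_eq_zero hΦ hη, smul_zero, map_smul, hη, map_zero, smul_eq_mul, mul_one] at h

end AlmostContact

theorem stmt3_general {V : Type*} [AddCommGroup V] [Module ℝ V]
    (Φ₁ Φ₂ : V →ₗ[ℝ] V) (ξ₁ ξ₂ : V) (η₁ η₂ : V →ₗ[ℝ] ℝ)
    (hΦ₁ : ∀ x : V, Φ₁ (Φ₁ x) = -x + η₁ x • ξ₁)
    (hΦ₂ : ∀ x : V, Φ₂ (Φ₂ x) = -x + η₂ x • ξ₂) (hη₂ : η₂ ξ₂ = 1)
    (h1 : Φ₁ ξ₂ = -Φ₂ ξ₁)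
    (h2 : ∀ x : V, η₁ (Φ₂ x) = -η₂ (Φ₁ x))
    (h3 : η₁ ξ₂ = 0) (h4 : η₂ ξ₁ = 0)
    (h5 : ∀ x : V, Φ₁ (Φ₂ x) - η₂ x • ξ₁ = -Φ₂ (Φ₁ x) + η₁ x • ξ₂) :
    ∀ x : V,
      (Φ₁ (Φ₂ (Φ₁ (Φ₂ x) - η₂ x • ξ₁)) - η₂ (Φ₁ (Φ₂ x) - η₂ x • ξ₁) • ξ₁)
        = -x + η₁ (Φ₂ x) • Φ₁ ξ₂ := by
  intro x
  have hη₂Φ₂ : η₂ (Φ₂ x) = 0 := AlmostContact.eta_map_eq_zero hΦ₂ hη₂ x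
  have hη₂Φ₃ : η₂ (Φ₁ (Φ₂ x) - η₂ x • ξ₁) = η₁ x := by
    have h := h2 (Φ₂ x)
    rw [hΦ₂, map_add, map_neg, map_smul, h3, smul_zero, add_zero] at h
    rw [map_sub, map_smul, h4, smul_zero, sub_zero]
    linarith
  have hΦ₂Φ₃ : Φ₂ (Φ₁ (Φ₂ x) - η₂ x • ξ₁) = Φ₁ x + η₁ (Φ₂ x) • ξ₂ := by
    have h := h5 (Φ₂ x)
    rw [hΦ₂, hη₂Φ₂, zero_smul, sub_zero, map_add, map_neg, map_smul, h1] at h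
    rw [map_sub, map_smul]
    linear_combination (norm := module) h
  rw [hΦ₂Φ₃, hη₂Φ₃, map_add, map_smul, hΦ₁]
  module

theorem stmt3 {V : Type*} [AddCommGroup V] [Module ℝ V]
    (Φ₁ Φ₂ : V →ₗ[ℝ] V) (ξ₁ ξ₂ : V) (η₁ η₂ : V →ₗ[ℝ] ℝ)
    (hΦ₁ : ∀ x : V, Φ₁ (Φ₁ x) = -x + η₁ x • ξ₁) (hη₁ : η₁ ξ₁ = 1)
    (hΦ₂ : ∀ x : V, Φ₂ (Φ₂ x) = -x + η₂ x • ξ₂) (hη₂ : η₂ ξ₂ = 1)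
    (h1 : Φ₁ ξ₂ = -Φ₂ ξ₁)
    (h2 : ∀ x : V, η₁ (Φ₂ x) = -η₂ (Φ₁ x))
    (h3 : η₁ ξ₂ = 0) (h4 : η₂ ξ₁ = 0)
    (h5 : ∀ x : V, Φ₁ (Φ₂ x) - η₂ x • ξ₁ = -Φ₂ (Φ₁ x) + η₁ x • ξ₂) :
    ∀ x : V,
      (Φ₁ (Φ₂ (Φ₁ (Φ₂ x) - η₂ x • ξ₁)) - η₂ (Φ₁ (Φ₂ x) - η₂ x • ξ₁) • ξ₁)
        = -x + η₁ (Φ₂ x) • Φ₁ ξ₂ :=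
  stmt3_general Φ₁ Φ₂ ξ₁ ξ₂ η₁ η₂ hΦ₁ hΦ₂ hη₂ h1 h2 h3 h4 h5
end

section
/- Let V be a real vector space carrying an almost contact 3-structure (Φ_α, ξ_α, η_α), α = 1,2,3, i.e. each triple is an almost contact structure and for every cyclic permutation (α,β,γ) of (1,2,3): Φ_α∘Φ_β - η_β⊗ξ_α = Φ_γ, Φ_α(ξ_β) = ξ_γ, and η_α∘Φ_β = η_γ. Define on V ⊕ ℝ the endomorphisms I_α(x, t) := (Φ_α(x) + t·ξ_α, -η_α(x)). Then I_α ∘ I_β = I_γ and I_β ∘ I_α = -I_γ for every cyclic permutation (α,β,γ) of (1,2,3); in particular (I₁, I₂, I₃) is an almost hypercomplex (quaternionic) triple: I_α² = -id and I₁I₂ = I₃ = -I₂I₁. -/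
/-!
Write `I = cone(Φ, ξ, η)`. Each cone squares to `-id` because an almost contact structure
automatically satisfies `Φ ξ = 0` and `η ∘ Φ = 0`. Expanding `I_α (I_β (x, t))` gives
`(Φ_α Φ_β x - η_β x • ξ_α + t • Φ_α ξ_β, -η_α (Φ_β x) - t • η_α ξ_β)`, which is `I_γ (x, t)` by the
cyclic relations once `η_α ξ_β = 0`; the latter holds since `ξ_β = -Φ_α ξ_γ` and `η_α ∘ Φ_α = 0`.
The anticommutation relations are then formal: `I_β I_α = I_β (I_β I_γ) = -I_γ`.
-/

section AlmostContact

variable {R V : Type*} [CommRing R] [AddCommGroup V] [Module R V]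

structure IsAlmostContact (Φ : V →ₗ[R] V) (ξ : V) (η : V →ₗ[R] R) : Prop where
  apply_apply : ∀ x, Φ (Φ x) = -x + η x • ξ
  eta_xi : η ξ = 1

def coneMap (Φ : V →ₗ[R] V) (ξ : V) (η : V →ₗ[R] R) (p : V × R) : V × R :=
  (Φ p.1 + p.2 • ξ, -η p.1)

namespace IsAlmostContact

variable {Φ : V →ₗ[R] V} {ξ : V} {η : V →ₗ[R] R}

theorem apply_xi_eq_zero [IsReduced R] (h : IsAlmostContact Φ ξ η) : Φ ξ = 0 := by
  have hΦΦξ : Φ (Φ ξ) = 0 := by rw [h.apply_apply, h.eta_xi, one_smul, neg_add_cancel]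
  have hΦξ : Φ ξ = η (Φ ξ) • ξ := by
    have := h.apply_apply (Φ ξ)
    rw [hΦΦξ, map_zero] at this
    linear_combination (norm := module) this
  have hsq : η (Φ ξ) ^ 2 = 0 :=
    calc η (Φ ξ) ^ 2 = η (η (Φ ξ) • Φ ξ) := by rw [map_smul, smul_eq_mul, sq]
      _ = η (Φ (η (Φ ξ) • ξ)) := by rw [map_smul Φ]
      _ = 0 := by rw [← hΦξ, hΦΦξ, map_zero]
  rw [hΦξ, (IsNilpotent.eq_zero ⟨2, hsq⟩ : η (Φ ξ) = 0), zero_smul]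

theorem eta_apply_eq_zero [IsReduced R] (h : IsAlmostContact Φ ξ η) (x : V) : η (Φ x) = 0 := by
  have hΦ₃ : Φ (Φ (Φ x)) = -Φ x + η (Φ x) • ξ := h.apply_apply (Φ x)
  rw [h.apply_apply x, map_add, map_neg, map_smul, h.apply_xi_eq_zero, smul_zero, add_zero,
    left_eq_add] at hΦ₃
  simpa [h.eta_xi] using congrArg η hΦ₃

theorem coneMap_coneMap [IsReduced R] (h : IsAlmostContact Φ ξ η) (p : V × R) :
    coneMap Φ ξ η (coneMap Φ ξ η p) = -p := by
  obtain ⟨x, t⟩ := p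
  simp only [coneMap, map_add, map_smul, h.apply_apply, h.apply_xi_eq_zero,
    h.eta_apply_eq_zero, h.eta_xi, Prod.neg_mk, Prod.mk.injEq]
  constructor
  · module
  · simp

/-- `η_α ξ_β = 0` for a cyclic triple `(α, β, γ)`, read off the relation `Φ_β Φ_γ - η_γ ⊗ ξ_β = Φ_α`. -/
theorem eta_apply_xi_eq_zero [IsReduced R] {Φ' Φ'' : V →ₗ[R] V} {ξ' ξ'' : V} {η'' : V →ₗ[R] R}
    (h : IsAlmostContact Φ ξ η) (h'' : IsAlmostContact Φ'' ξ'' η'')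
    (hcomp : ∀ x, Φ' (Φ'' x) - η'' x • ξ' = Φ x) : η ξ' = 0 := by
  have hξ' : Φ ξ'' = -ξ' := by
    simpa [h''.apply_xi_eq_zero, h''.eta_xi] using (hcomp ξ'').symm
  rw [← neg_eq_zero, ← map_neg, ← hξ', h.eta_apply_eq_zero]

end IsAlmostContact

theorem coneMap_coneMap_of_comp {Φ Φ' Φ'' : V →ₗ[R] V} {ξ ξ' ξ'' : V} {η η' η'' : V →ₗ[R] R}
    (hcomp : ∀ x, Φ (Φ' x) - η' x • ξ = Φ'' x) (hξ : Φ ξ' = ξ'') (hη : ∀ x, η (Φ' x) = η'' x)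
    (hηξ : η ξ' = 0) (p : V × R) :
    coneMap Φ ξ η (coneMap Φ' ξ' η' p) = coneMap Φ'' ξ'' η'' p := by
  obtain ⟨x, t⟩ := p
  simp only [coneMap, map_add, map_smul, hξ, hη, hηξ, ← hcomp, Prod.mk.injEq]
  constructor
  · module
  · simp

end AlmostContact

theorem apply_apply_eq_neg_of_apply_apply_eq {X : Type*} [Neg X] {f g h : X → X}
    (hg : ∀ p, g (g p) = -p) (hgh : ∀ p, g (h p) = f p) (p : X) : g (f p) = -h p := by
  rw [← hgh, hg]

theorem stmt4 {V : Type*} [AddCommGroup V] [Module ℝ V]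
    (Φ₁ Φ₂ Φ₃ : V →ₗ[ℝ] V) (ξ₁ ξ₂ ξ₃ : V) (η₁ η₂ η₃ : V →ₗ[ℝ] ℝ)
    (hΦ₁ : ∀ x : V, Φ₁ (Φ₁ x) = -x + η₁ x • ξ₁) (hη₁ : η₁ ξ₁ = 1)
    (hΦ₂ : ∀ x : V, Φ₂ (Φ₂ x) = -x + η₂ x • ξ₂) (hη₂ : η₂ ξ₂ = 1)
    (hΦ₃ : ∀ x : V, Φ₃ (Φ₃ x) = -x + η₃ x • ξ₃) (hη₃ : η₃ ξ₃ = 1)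
    (hc12 : ∀ x : V, Φ₁ (Φ₂ x) - η₂ x • ξ₁ = Φ₃ x)
    (hc23 : ∀ x : V, Φ₂ (Φ₃ x) - η₃ x • ξ₂ = Φ₁ x)
    (hc31 : ∀ x : V, Φ₃ (Φ₁ x) - η₁ x • ξ₃ = Φ₂ x)
    (hξ12 : Φ₁ ξ₂ = ξ₃) (hξ23 : Φ₂ ξ₃ = ξ₁) (hξ31 : Φ₃ ξ₁ = ξ₂)
    (hη12 : ∀ x : V, η₁ (Φ₂ x) = η₃ x)
    (hη23 : ∀ x : V, η₂ (Φ₃ x) = η₁ x)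
    (hη31 : ∀ x : V, η₃ (Φ₁ x) = η₂ x)
    (I₁ I₂ I₃ : V × ℝ → V × ℝ)
    (hI₁ : ∀ x : V, ∀ t : ℝ, I₁ (x, t) = (Φ₁ x + t • ξ₁, -η₁ x))
    (hI₂ : ∀ x : V, ∀ t : ℝ, I₂ (x, t) = (Φ₂ x + t • ξ₂, -η₂ x))
    (hI₃ : ∀ x : V, ∀ t : ℝ, I₃ (x, t) = (Φ₃ x + t • ξ₃, -η₃ x)) :
    (∀ p : V × ℝ, I₁ (I₂ p) = I₃ p) ∧
    (∀ p : V × ℝ, I₂ (I₃ p) = I₁ p) ∧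
    (∀ p : V × ℝ, I₃ (I₁ p) = I₂ p) ∧
    (∀ p : V × ℝ, I₂ (I₁ p) = -I₃ p) ∧
    (∀ p : V × ℝ, I₃ (I₂ p) = -I₁ p) ∧
    (∀ p : V × ℝ, I₁ (I₃ p) = -I₂ p) ∧
    (∀ p : V × ℝ, I₁ (I₁ p) = -p) ∧
    (∀ p : V × ℝ, I₂ (I₂ p) = -p) ∧
    (∀ p : V × ℝ, I₃ (I₃ p) = -p) := by
  have s₁ : IsAlmostContact Φ₁ ξ₁ η₁ := ⟨hΦ₁, hη₁⟩
  have s₂ : IsAlmostContact Φ₂ ξ₂ η₂ := ⟨hΦ₂, hη₂⟩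
  have s₃ : IsAlmostContact Φ₃ ξ₃ η₃ := ⟨hΦ₃, hη₃⟩
  obtain rfl : I₁ = coneMap Φ₁ ξ₁ η₁ := funext fun p => hI₁ p.1 p.2
  obtain rfl : I₂ = coneMap Φ₂ ξ₂ η₂ := funext fun p => hI₂ p.1 p.2
  obtain rfl : I₃ = coneMap Φ₃ ξ₃ η₃ := funext fun p => hI₃ p.1 p.2
  have h₁₂ := coneMap_coneMap_of_comp hc12 hξ12 hη12 (s₁.eta_apply_xi_eq_zero s₃ hc23)
  have h₂₃ := coneMap_coneMap_of_comp hc23 hξ23 hη23 (s₂.eta_apply_xi_eq_zero s₁ hc31)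
  have h₃₁ := coneMap_coneMap_of_comp hc31 hξ31 hη31 (s₃.eta_apply_xi_eq_zero s₂ hc12)
  exact ⟨h₁₂, h₂₃, h₃₁,
    apply_apply_eq_neg_of_apply_apply_eq s₂.coneMap_coneMap h₂₃,
    apply_apply_eq_neg_of_apply_apply_eq s₃.coneMap_coneMap h₃₁,
    apply_apply_eq_neg_of_apply_apply_eq s₁.coneMap_coneMap h₁₂,
    s₁.coneMap_coneMap, s₂.coneMap_coneMap, s₃.coneMap_coneMap⟩
end

section
/- Let V be a real vector space with two almost contact structures (Φ₁, ξ₁, η₁), (Φ₂, ξ₂, η₂) satisfying Kuo's compatibility relations (Φ₁ξ₂ = -Φ₂ξ₁, η₁∘Φ₂ = -η₂∘Φ₁, η₁(ξ₂) = η₂(ξ₁) = 0, Φ₁∘Φ₂ - η₂⊗ξ₁ = -Φ₂∘Φ₁ + η₁⊗ξ₂). With ξ₃ := Φ₁ξ₂, η₃ := η₁∘Φ₂, Φ₃ := Φ₁∘Φ₂ - η₂⊗ξ₁, the following hold: Φ₂(ξ₃) = ξ₁, Φ₃(ξ₁) = ξ₂, η₂∘Φ₃ = η₁, and η₃∘Φ₁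 = η₂. -/
section AlmostContact

variable {R V W : Type*} [Ring R] [AddCommGroup V] [Module R V] [AddCommGroup W] [Module R W]
  {Φ : V →ₗ[R] V} {ξ : V} {η : V →ₗ[R] R}

theorem apply_apply_eq_neg_of_map_eq_zero (hΦ : ∀ x, Φ (Φ x) = -x + η x • ξ) {v : V}
    (hv : η v = 0) : Φ (Φ v) = -v := by
  rw [hΦ, hv, zero_smul, add_zero]

theorem map_apply_apply_eq_neg_of_map_eq_zero (hΦ : ∀ x, Φ (Φ x) = -x + η x • ξ)
    {θ : V →ₗ[R] W} (hθ : θ ξ = 0) (x : V) : θ (Φ (Φ x)) = -θ x := by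
  rw [hΦ, map_add, map_neg, map_smul, hθ, smul_zero, add_zero]

end AlmostContact

theorem stmt19_general {V : Type*} [AddCommGroup V] [Module ℝ V]
    (Φ₁ Φ₂ : V →ₗ[ℝ] V) (ξ₁ ξ₂ : V) (η₁ η₂ : V →ₗ[ℝ] ℝ)
    (hΦ₁ : ∀ x : V, Φ₁ (Φ₁ x) = -x + η₁ x • ξ₁)
    (hΦ₂ : ∀ x : V, Φ₂ (Φ₂ x) = -x + η₂ x • ξ₂)
    (h1 : Φ₁ ξ₂ = -Φ₂ ξ₁)
    (h2 : ∀ x : V, η₁ (Φ₂ x) = -η₂ (Φ₁ x))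
    (h3 : η₁ ξ₂ = 0) (h4 : η₂ ξ₁ = 0)
    (ξ₃ : V) (η₃ : V →ₗ[ℝ] ℝ) (Φ₃ : V →ₗ[ℝ] V)
    (hξ₃ : ξ₃ = Φ₁ ξ₂)
    (hη₃ : ∀ x : V, η₃ x = η₁ (Φ₂ x))
    (hΦ₃ : ∀ x : V, Φ₃ x = Φ₁ (Φ₂ x) - η₂ x • ξ₁) :
    Φ₂ ξ₃ = ξ₁ ∧ Φ₃ ξ₁ = ξ₂ ∧
    (∀ x : V, η₂ (Φ₃ x) = η₁ x) ∧
    (∀ x : V, η₃ (Φ₁ x) = η₂ x) := by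
  have hΦ₂ξ₁ : Φ₂ ξ₁ = -Φ₁ ξ₂ := by rw [h1, neg_neg]
  refine ⟨?_, ?_, fun x => ?_, fun x => ?_⟩
  · rw [hξ₃, h1, map_neg, apply_apply_eq_neg_of_map_eq_zero hΦ₂ h4, neg_neg]
  · rw [hΦ₃, h4, zero_smul, sub_zero, hΦ₂ξ₁, map_neg,
      apply_apply_eq_neg_of_map_eq_zero hΦ₁ h3, neg_neg]
  · rw [hΦ₃, map_sub, map_smul, h4, smul_zero, sub_zero, ← neg_neg (η₂ _), ← h2,
      map_apply_apply_eq_neg_of_map_eq_zero hΦ₂ h3, neg_neg]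
  · rw [hη₃, h2, map_apply_apply_eq_neg_of_map_eq_zero hΦ₁ h4, neg_neg]

theorem stmt19 {V : Type*} [AddCommGroup V] [Module ℝ V]
    (Φ₁ Φ₂ : V →ₗ[ℝ] V) (ξ₁ ξ₂ : V) (η₁ η₂ : V →ₗ[ℝ] ℝ)
    (hΦ₁ : ∀ x : V, Φ₁ (Φ₁ x) = -x + η₁ x • ξ₁) (hη₁ : η₁ ξ₁ = 1)
    (hΦ₂ : ∀ x : V, Φ₂ (Φ₂ x) = -x + η₂ x • ξ₂) (hη₂ : η₂ ξ₂ = 1)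
    (h1 : Φ₁ ξ₂ = -Φ₂ ξ₁)
    (h2 : ∀ x : V, η₁ (Φ₂ x) = -η₂ (Φ₁ x))
    (h3 : η₁ ξ₂ = 0) (h4 : η₂ ξ₁ = 0)
    (h5 : ∀ x : V, Φ₁ (Φ₂ x) - η₂ x • ξ₁ = -Φ₂ (Φ₁ x) + η₁ x • ξ₂)
    (ξ₃ : V) (η₃ : V →ₗ[ℝ] ℝ) (Φ₃ : V →ₗ[ℝ] V)
    (hξ₃ : ξ₃ = Φ₁ ξ₂)
    (hη₃ : ∀ x : V, η₃ x = η₁ (Φ₂ x))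
    (hΦ₃ : ∀ x : V, Φ₃ x = Φ₁ (Φ₂ x) - η₂ x • ξ₁) :
    Φ₂ ξ₃ = ξ₁ ∧ Φ₃ ξ₁ = ξ₂ ∧
    (∀ x : V, η₂ (Φ₃ x) = η₁ x) ∧
    (∀ x : V, η₃ (Φ₁ x) = η₂ x) :=
  stmt19_general Φ₁ Φ₂ ξ₁ ξ₂ η₁ η₂ hΦ₁ hΦ₂ h1 h2 h3 h4 ξ₃ η₃ Φ₃ hξ₃ hη₃ hΦ₃
end
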